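/- arXiv:1806.00209 — 2 statements merged into one kernel-verified Lean document; each statement's English description precedes it below -/
import Mathlib

section
/- Difference Mason theorem: Let a, b, c ∈ ℂ[z] be relatively prime polynomials satisfying a + b = c, not all constant, and let κ ∈ ℂ \ {0}. Then max(deg a, deg b, deg c) ≤ ñ_κ(a) + ñ_κ(b) + ñ_κ(c) − 1. -/
open Polynomial

noncomputable def deltaP (κ : ℂ) (p : ℂ[X]) : ℂ[X] := p.comp (X + C κ) - p

noncomputable def nTilde (κ : ℂ) (p : ℂ[X]) : ℕ :=
  ∑ᶠ w : ℂ, (p.rootMultiplicity w - min (p.rootMultiplicity w) (p.rootMultiplicity (w + κ)))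

noncomputable def radTilde (κ : ℂ) (p : ℂ[X]) : ℂ[X] :=
  ∏ᶠ w : ℂ, (X - C w) ^ (p.rootMultiplicity w - min (p.rootMultiplicity w) (p.rootMultiplicity (w + κ)))

noncomputable def nTildeQ (κ : ℂ) (q : ℕ) (p : ℂ[X]) : ℕ :=
  ∑ᶠ w : ℂ, (p.rootMultiplicity w -
    (Finset.range (q + 1)).inf' (Finset.nonempty_range_iff.mpr (Nat.succ_ne_zero q)) (fun j => p.rootMultiplicity (w + (j : ℂ) * κ)))

noncomputable def kFac (κ : ℂ) (n : ℕ) (p : ℂ[X]) : ℂ[X] :=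
  ∏ j ∈ Finset.range n, p.comp (X + C ((j : ℂ) * κ))

/- ### Auxiliary lemmas -/

lemma shift_comp (p : ℂ[X]) (s t : ℂ) :
    (p.comp (X + C s)).comp (X + C t) = p.comp (X + C (s + t)) := by
  rw [comp_assoc]
  congr 1
  simp [add_comp, map_add]
  ring

lemma shift_ne_zero {p : ℂ[X]} (hp : p ≠ 0) (s : ℂ) : p.comp (X + C s) ≠ 0 := by
  intro h
  apply hp
  have h2 : (p.comp (X + C s)).comp (X + C (-s)) = 0 := by rw [h]; simp
  rw [shift_comp] at h2
  simpa using h2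

lemma natDegree_shift (p : ℂ[X]) (s : ℂ) : (p.comp (X + C s)).natDegree = p.natDegree := by
  simp [natDegree_comp]

lemma leadingCoeff_shift (p : ℂ[X]) (s : ℂ) :
    (p.comp (X + C s)).leadingCoeff = p.leadingCoeff := by
  rcases eq_or_ne p.natDegree 0 with h | h
  · obtain ⟨x, rfl⟩ := natDegree_eq_zero.mp h
    simp
  · rw [leadingCoeff_comp (by simp : (X + C s).natDegree ≠ 0)]
    simp

lemma dvd_shift {p q : ℂ[X]} (s : ℂ) (h : p ∣ q) : p.comp (X + C s) ∣ q.comp (X + C s) := by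
  obtain ⟨r, rfl⟩ := h
  exact ⟨r.comp (X + C s), by rw [mul_comp]⟩

lemma rootMultiplicity_shift (p : ℂ[X]) (s w : ℂ) :
    (p.comp (X + C s)).rootMultiplicity w = p.rootMultiplicity (w + s) := by
  rcases eq_or_ne p 0 with rfl | hp
  · simp
  have hps := shift_ne_zero hp s
  apply le_antisymm
  · rw [le_rootMultiplicity_iff hp]
    have h1 : (X - C w) ^ ((p.comp (X + C s)).rootMultiplicity w) ∣ p.comp (X + C s) :=
      pow_rootMultiplicity_dvd _ _
    have h2 := dvd_shift (-s) h1
    rw [shift_comp] at h2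
    simp only [add_neg_cancel, map_zero, add_zero, comp_X] at h2
    convert h2 using 2
    rw [pow_comp, sub_comp, X_comp, C_comp]
    simp only [map_add, map_neg, map_sub]
    ring
  · rw [le_rootMultiplicity_iff hps]
    have h1 : (X - C (w + s)) ^ (p.rootMultiplicity (w + s)) ∣ p := pow_rootMultiplicity_dvd _ _
    have h2 := dvd_shift s h1
    convert h2 using 2
    rw [pow_comp, sub_comp, X_comp, C_comp]
    simp only [map_add, map_neg, map_sub]
    ring

lemma support_rootMult (p : ℂ[X]) :
    (Function.support fun w => p.rootMultiplicity w) ⊆ ↑p.roots.toFinset := by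
  intro w hw
  simp only [Function.mem_support] at hw
  have hp : p ≠ 0 := by rintro rfl; simp at hw
  simp only [Multiset.mem_toFinset, Finset.coe_insert, Set.mem_setOf_eq, Finset.coe_sort_coe,
    mem_roots hp, Finset.mem_coe]
  exact (rootMultiplicity_pos hp).mp (Nat.pos_of_ne_zero hw)

lemma finsum_rootMult (p : ℂ[X]) (hp : p ≠ 0) :
    ∑ᶠ w : ℂ, p.rootMultiplicity w = p.natDegree := by
  rw [finsum_eq_sum_of_support_subset _ (support_rootMult p)]
  have h1 : ∑ w ∈ p.roots.toFinset, p.rootMultiplicity w = p.roots.card := by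
    rw [← Multiset.toFinset_sum_count_eq]
    exact Finset.sum_congr rfl (fun w _ => (count_roots p).symm ▸ rfl)
  rw [h1]
  have h := Splits.natDegree_eq_card_roots (IsAlgClosed.splits p)
  simpa using h.symm

lemma rootMult_le_of_dvd {d p : ℂ[X]} (hp : p ≠ 0) (h : d ∣ p) (w : ℂ) :
    d.rootMultiplicity w ≤ p.rootMultiplicity w := by
  rw [le_rootMultiplicity_iff hp]
  exact dvd_trans (pow_rootMultiplicity_dvd d w) h

lemma rootMult_gcd (p q : ℂ[X]) (hp : p ≠ 0) (hq : q ≠ 0) (w : ℂ) :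
    (EuclideanDomain.gcd p q).rootMultiplicity w
      = min (p.rootMultiplicity w) (q.rootMultiplicity w) := by
  have hg : EuclideanDomain.gcd p q ≠ 0 := by
    intro h
    exact hp (EuclideanDomain.gcd_eq_zero_iff.mp h).1
  apply le_antisymm
  · exact le_min (rootMult_le_of_dvd hp (EuclideanDomain.gcd_dvd_left p q) w)
      (rootMult_le_of_dvd hq (EuclideanDomain.gcd_dvd_right p q) w)
  · rw [le_rootMultiplicity_iff hg]
    apply EuclideanDomain.dvd_gcd
    · exact dvd_trans (pow_dvd_pow _ (min_le_left _ _)) (pow_rootMultiplicity_dvd p w)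
    · exact dvd_trans (pow_dvd_pow _ (min_le_right _ _)) (pow_rootMultiplicity_dvd q w)

lemma nTilde_add_gcd (κ : ℂ) (p : ℂ[X]) (hp : p ≠ 0) :
    nTilde κ p + (EuclideanDomain.gcd p (p.comp (X + C κ))).natDegree = p.natDegree := by
  set g := EuclideanDomain.gcd p (p.comp (X + C κ)) with hgdef
  have hps := shift_ne_zero hp κ
  have hg : g ≠ 0 := fun h => hp (EuclideanDomain.gcd_eq_zero_iff.mp h).1
  have hmin : ∀ w, g.rootMultiplicity w
      = min (p.rootMultiplicity w) (p.rootMultiplicity (w + κ)) := by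
    intro w
    rw [hgdef, rootMult_gcd p _ hp hps, rootMultiplicity_shift]
  set s := p.roots.toFinset with hs
  have hsub1 : (Function.support fun w =>
      p.rootMultiplicity w - min (p.rootMultiplicity w) (p.rootMultiplicity (w + κ))) ⊆ ↑s := by
    intro w hw
    apply support_rootMult p
    simp only [Function.mem_support] at hw ⊢
    omega
  have hsub2 : (Function.support fun w => g.rootMultiplicity w) ⊆ ↑s := by
    intro w hw
    apply support_rootMult p
    simp only [Function.mem_support, hmin] at hw ⊢
    omega
  have e1 : nTilde κ p = ∑ w ∈ s,
      (p.rootMultiplicity w - min (p.rootMultiplicity w) (p.rootMultiplicity (w + κ))) :=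
    finsum_eq_sum_of_support_subset _ hsub1
  have e2 : g.natDegree = ∑ w ∈ s, min (p.rootMultiplicity w) (p.rootMultiplicity (w + κ)) := by
    rw [← finsum_rootMult g hg, finsum_eq_sum_of_support_subset _ hsub2]
    exact Finset.sum_congr rfl fun w _ => hmin w
  have e3 : p.natDegree = ∑ w ∈ s, p.rootMultiplicity w := by
    rw [← finsum_rootMult p hp, finsum_eq_sum_of_support_subset _ (support_rootMult p)]
  rw [e1, e2, e3, ← Finset.sum_add_distrib]
  exact Finset.sum_congr rfl fun w _ => by omega

lemma casorati_deg (κ : ℂ) (p q : ℂ[X]) (hp : p ≠ 0) (hq : q ≠ 0)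
    (hC : p * q.comp (X + C κ) - p.comp (X + C κ) * q ≠ 0) :
    (p * q.comp (X + C κ) - p.comp (X + C κ) * q).natDegree + 1
      ≤ p.natDegree + q.natDegree := by
  set u := p * q.comp (X + C κ) with hu
  set v := p.comp (X + C κ) * q with hv
  have hu0 : u ≠ 0 := mul_ne_zero hp (shift_ne_zero hq κ)
  have hv0 : v ≠ 0 := mul_ne_zero (shift_ne_zero hp κ) hq
  have hdu : u.natDegree = p.natDegree + q.natDegree := by
    rw [hu, natDegree_mul hp (shift_ne_zero hq κ), natDegree_shift]
  have hdv : v.natDegree = p.natDegree + q.natDegree := by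
    rw [hv, natDegree_mul (shift_ne_zero hp κ) hq, natDegree_shift]
  have hdeq : u.degree = v.degree := by
    rw [degree_eq_natDegree hu0, degree_eq_natDegree hv0, hdu, hdv]
  have hlc : u.leadingCoeff = v.leadingCoeff := by
    rw [hu, hv, leadingCoeff_mul, leadingCoeff_mul, leadingCoeff_shift, leadingCoeff_shift,
      mul_comm]
  have hlt : (u - v).degree < u.degree := degree_sub_lt hdeq hu0 hlc
  have := natDegree_lt_natDegree hC hlt
  omega

lemma const_of_shift_eq {κ : ℂ} (hκ : κ ≠ 0) {p : ℂ[X]} (h : p.comp (X + C κ) = p) :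
    p.natDegree = 0 := by
  by_contra hd
  have hp : p ≠ 0 := fun h0 => hd (by simp [h0])
  set q := p - C (p.eval 0) with hq
  have hq0 : q ≠ 0 := by
    intro h0
    apply hd
    have : p = C (p.eval 0) := by rwa [sub_eq_zero] at h0
    rw [this]; simp
  have hstep : ∀ x : ℂ, p.eval (x + κ) = p.eval x := by
    intro x
    conv_rhs => rw [← h]
    simp [eval_comp, add_comm]
  have hval : ∀ n : ℕ, p.eval ((n : ℂ) * κ) = p.eval 0 := by
    intro n
    induction n with
    | zero => simp
    | succ n ih => rw [Nat.cast_succ, add_mul, one_mul, hstep, ih]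
  have hroots : ∀ n : ℕ, q.IsRoot ((n : ℂ) * κ) := by
    intro n
    simp [hq, IsRoot, hval n]
  have hfin := finite_setOf_isRoot hq0
  have hinj : Function.Injective (fun n : ℕ => (n : ℂ) * κ) := by
    intro m n hmn
    simp only [mul_eq_mul_right_iff, hκ, or_false] at hmn
    exact_mod_cast hmn
  have : Set.Infinite { x | q.IsRoot x } :=
    Set.infinite_of_injective_forall_mem (f := fun n : ℕ => (n : ℂ) * κ) hinj hroots
  exact this hfin

theorem stmt_5 (a b c : ℂ[X]) (κ : ℂ) (hκ : κ ≠ 0)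
    (hrp : ∀ d : ℂ[X], d ∣ a → d ∣ b → d ∣ c → IsUnit d)
    (hsum : a + b = c)
    (hnc : ¬ (a.natDegree = 0 ∧ b.natDegree = 0 ∧ c.natDegree = 0)) :
    max (max a.natDegree b.natDegree) c.natDegree + 1 ≤
      nTilde κ a + nTilde κ b + nTilde κ c := by
  -- nonvanishing
  have ha : a ≠ 0 := by
    rintro rfl
    rw [zero_add] at hsum
    have hu := hrp b (dvd_zero b) dvd_rfl (hsum ▸ dvd_rfl)
    exact hnc ⟨by simp, natDegree_eq_zero_of_isUnit hu, hsum ▸ natDegree_eq_zero_of_isUnit hu⟩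
  have hb : b ≠ 0 := by
    rintro rfl
    rw [add_zero] at hsum
    have hu := hrp a dvd_rfl (dvd_zero a) (hsum ▸ dvd_rfl)
    exact hnc ⟨natDegree_eq_zero_of_isUnit hu, by simp, hsum ▸ natDegree_eq_zero_of_isUnit hu⟩
  have hc : c ≠ 0 := by
    rintro rfl
    have hba : b = -a := by linear_combination hsum
    have hu := hrp a dvd_rfl (hba ▸ (dvd_neg.mpr dvd_rfl)) (dvd_zero a)
    refine hnc ⟨natDegree_eq_zero_of_isUnit hu, ?_, by simp⟩
    rw [hba, natDegree_neg]
    exact natDegree_eq_zero_of_isUnit hu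
  -- pairwise coprimality
  have hab : IsCoprime a b := by
    rw [← EuclideanDomain.gcd_isUnit_iff]
    exact hrp _ (EuclideanDomain.gcd_dvd_left a b) (EuclideanDomain.gcd_dvd_right a b)
      (hsum ▸ dvd_add (EuclideanDomain.gcd_dvd_left a b) (EuclideanDomain.gcd_dvd_right a b))
  have hac : IsCoprime a c := by
    rw [← EuclideanDomain.gcd_isUnit_iff]
    refine hrp _ (EuclideanDomain.gcd_dvd_left a c) ?_ (EuclideanDomain.gcd_dvd_right a c)
    have : b = c - a := by linear_combination hsum
    rw [this]
    exact dvd_sub (EuclideanDomain.gcd_dvd_right a c) (EuclideanDomain.gcd_dvd_left a c)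
  have hbc : IsCoprime b c := by
    rw [← EuclideanDomain.gcd_isUnit_iff]
    refine hrp _ ?_ (EuclideanDomain.gcd_dvd_left b c) (EuclideanDomain.gcd_dvd_right b c)
    have : a = c - b := by linear_combination hsum
    rw [this]
    exact dvd_sub (EuclideanDomain.gcd_dvd_right b c) (EuclideanDomain.gcd_dvd_left b c)
  -- the Casorati determinant
  set K := a * b.comp (X + C κ) - a.comp (X + C κ) * b with hK
  have hcshift : c.comp (X + C κ) = a.comp (X + C κ) + b.comp (X + C κ) := by
    rw [← hsum, add_comp]
  have hKac : K = a * c.comp (X + C κ) - a.comp (X + C κ) * c := by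
    rw [hK, hcshift, ← hsum]; ring
  have hKcb : K = c * b.comp (X + C κ) - c.comp (X + C κ) * b := by
    rw [hK, hcshift, ← hsum]; ring
  -- K ≠ 0
  have hKne : K ≠ 0 := by
    intro h0
    have heq : a * b.comp (X + C κ) = a.comp (X + C κ) * b := by
      rw [hK] at h0; linear_combination h0
    have hdvd : a ∣ a.comp (X + C κ) :=
      hab.dvd_of_dvd_mul_right ⟨b.comp (X + C κ), heq.symm⟩
    obtain ⟨t, ht⟩ := hdvd
    have ht0 : t ≠ 0 := by
      rintro rfl
      exact shift_ne_zero ha κ (by rw [ht, mul_zero])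
    have hdt : t.natDegree = 0 := by
      have := natDegree_shift a κ
      rw [ht, natDegree_mul ha ht0] at this
      omega
    obtain ⟨k, hk⟩ := natDegree_eq_zero.mp hdt
    have hk1 : k = 1 := by
      have hlc := leadingCoeff_shift a κ
      rw [ht, ← hk, leadingCoeff_mul, leadingCoeff_C] at hlc
      have hla : a.leadingCoeff ≠ 0 := leadingCoeff_ne_zero.mpr ha
      have h2 : a.leadingCoeff * k = a.leadingCoeff * 1 := by rw [mul_one]; exact hlc
      exact mul_left_cancel₀ hla h2
    have hta : a.comp (X + C κ) = a := by
      rw [ht, ← hk, hk1, map_one, mul_one]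
    have hna : a.natDegree = 0 := const_of_shift_eq hκ hta
    have hbb : b.comp (X + C κ) = b := by
      rw [hta] at heq
      exact mul_left_cancel₀ ha heq
    have hnb : b.natDegree = 0 := const_of_shift_eq hκ hbb
    have hnc' : c.natDegree = 0 := by
      have := natDegree_add_le a b
      rw [hsum, hna, hnb] at this
      omega
    exact hnc ⟨hna, hnb, hnc'⟩
  -- the three gcds
  set ga := EuclideanDomain.gcd a (a.comp (X + C κ)) with hga
  set gb := EuclideanDomain.gcd b (b.comp (X + C κ)) with hgb
  set gc := EuclideanDomain.gcd c (c.comp (X + C κ)) with hgc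
  have hga0 : ga ≠ 0 := fun h => ha (EuclideanDomain.gcd_eq_zero_iff.mp h).1
  have hgb0 : gb ≠ 0 := fun h => hb (EuclideanDomain.gcd_eq_zero_iff.mp h).1
  have hgc0 : gc ≠ 0 := fun h => hc (EuclideanDomain.gcd_eq_zero_iff.mp h).1
  have hgaK : ga ∣ K := by
    rw [hK]
    exact dvd_sub ((EuclideanDomain.gcd_dvd_left _ _).mul_right _)
      ((EuclideanDomain.gcd_dvd_right _ _).mul_right _)
  have hgbK : gb ∣ K := by
    rw [hK]
    exact dvd_sub ((EuclideanDomain.gcd_dvd_right _ _).mul_left _)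
      ((EuclideanDomain.gcd_dvd_left _ _).mul_left _)
  have hgcK : gc ∣ K := by
    rw [hKcb]
    exact dvd_sub ((EuclideanDomain.gcd_dvd_left _ _).mul_right _)
      ((EuclideanDomain.gcd_dvd_right _ _).mul_right _)
  have hab' : IsCoprime ga gb :=
    (hab.of_isCoprime_of_dvd_left (EuclideanDomain.gcd_dvd_left _ _)).of_isCoprime_of_dvd_right
      (EuclideanDomain.gcd_dvd_left _ _)
  have hac' : IsCoprime ga gc :=
    (hac.of_isCoprime_of_dvd_left (EuclideanDomain.gcd_dvd_left _ _)).of_isCoprime_of_dvd_right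
      (EuclideanDomain.gcd_dvd_left _ _)
  have hbc' : IsCoprime gb gc :=
    (hbc.of_isCoprime_of_dvd_left (EuclideanDomain.gcd_dvd_left _ _)).of_isCoprime_of_dvd_right
      (EuclideanDomain.gcd_dvd_left _ _)
  have hprod : ga * gb * gc ∣ K :=
    (IsCoprime.mul_left hac' hbc').mul_dvd (hab'.mul_dvd hgaK hgbK) hgcK
  have hdegsum : ga.natDegree + gb.natDegree + gc.natDegree ≤ K.natDegree := by
    have h := natDegree_le_of_dvd hprod hKne
    rwa [natDegree_mul (mul_ne_zero hga0 hgb0) hgc0, natDegree_mul hga0 hgb0] at h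
  have h1 : K.natDegree + 1 ≤ a.natDegree + b.natDegree := by
    have := casorati_deg κ a b ha hb (hK ▸ hKne)
    rwa [← hK] at this
  have h2 : K.natDegree + 1 ≤ a.natDegree + c.natDegree := by
    have := casorati_deg κ a c ha hc (hKac ▸ hKne)
    rwa [← hKac] at this
  have h3 : K.natDegree + 1 ≤ c.natDegree + b.natDegree := by
    have := casorati_deg κ c b hc hb (hKcb ▸ hKne)
    rwa [← hKcb] at this
  have ea := nTilde_add_gcd κ a ha
  have eb := nTilde_add_gcd κ b hb
  have ec := nTilde_add_gcd κ c hc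
  rw [← hga] at ea
  rw [← hgb] at eb
  rw [← hgc] at ec
  omega
end

section
/- Let m ≥ 2 and p_1, …, p_m be non-constant polynomials in ℂ[z] such that [p_1]_κ^{n̄}, …, [p_m]_κ^{n̄} are relatively prime and satisfy [p_1]_κ^{n̄} + ⋯ + [p_m]_κ^{n̄} = 1 for some κ ∈ ℂ \ {0} and n ∈ ℕ. Then n ≤ m² − m − 1. -/
open Polynomial

open Polynomial


noncomputable section AuxMS

/-- Composition with `X + C c` as a ring hom. -/
def compHom (c : ℂ) : ℂ[X] →+* ℂ[X] := eval₂RingHom (C : ℂ →+* ℂ[X]) (X + C c)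

@[simp] lemma compHom_apply (c : ℂ) (p : ℂ[X]) : compHom c p = p.comp (X + C c) := rfl

lemma comp_linear_comp_linear (p : ℂ[X]) (a b : ℂ) :
    (p.comp (X + C a)).comp (X + C b) = p.comp (X + C (a + b)) := by
  rw [Polynomial.comp_assoc]
  congr 1
  rw [add_comp, X_comp, C_comp, add_assoc, ← C_add, add_comm b a]

lemma compHom_compHom (a b : ℂ) (p : ℂ[X]) :
    compHom b (compHom a p) = compHom (a + b) p := by
  simp [comp_linear_comp_linear]

lemma compHom_injective (c : ℂ) : Function.Injective (compHom c) := by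
  have h : Function.LeftInverse (compHom (-c)) (compHom c) := by
    intro p
    rw [compHom_compHom]
    simp
  exact h.injective

@[simp] lemma natDegree_comp_linear (p : ℂ[X]) (c : ℂ) :
    (p.comp (X + C c)).natDegree = p.natDegree := by
  rw [natDegree_comp, natDegree_X_add_C, mul_one]

@[simp] lemma leadingCoeff_comp_linear (p : ℂ[X]) (c : ℂ) :
    (p.comp (X + C c)).leadingCoeff = p.leadingCoeff := by
  rw [leadingCoeff_comp (by simp [natDegree_X_add_C])]
  simp [(monic_X_add_C c).leadingCoeff]

lemma comp_linear_eq_zero_iff {p : ℂ[X]} {c : ℂ} : p.comp (X + C c) = 0 ↔ p = 0 := by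
  constructor
  · intro h
    apply compHom_injective c
    simpa using h
  · rintro rfl; simp

end AuxMS

section DetBound
variable {m : ℕ}

lemma natDegree_det_le_special (M : Matrix (Fin m) (Fin m) ℂ[X]) (r : Fin m → ℕ)
    (j₀ k₀ : Fin m) (h1 : ∀ k, k ≠ k₀ → M j₀ k = 0)
    (h2 : (M j₀ k₀).natDegree ≤ r j₀)
    (h3 : ∀ i k, i ≠ j₀ → k ≠ k₀ → (M i k).natDegree ≤ r i) :
    M.det.natDegree ≤ ∑ i, r i := by
  rw [Matrix.det_apply]
  refine natDegree_sum_le_of_forall_le _ _ ?_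
  intro σ _
  have hsmul : (Equiv.Perm.sign σ • ∏ i, M (σ i) i).natDegree
      ≤ (∏ i, M (σ i) i).natDegree := by
    rw [Units.smul_def, zsmul_eq_mul]
    refine le_trans (natDegree_mul_le) ?_
    simp [natDegree_intCast]
  refine le_trans hsmul ?_
  by_cases hσ : σ k₀ = j₀
  · have key : ∀ i, (M (σ i) i).natDegree ≤ r (σ i) := by
      intro i
      by_cases hi : i = k₀
      · subst hi; rw [hσ]; exact h2
      · refine h3 _ _ ?_ hi
        intro hc; exact hi (σ.injective (hσ ▸ hc))
    calc (∏ i, M (σ i) i).natDegree ≤ ∑ i, (M (σ i) i).natDegree := natDegree_prod_le _ _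
      _ ≤ ∑ i, r (σ i) := Finset.sum_le_sum (fun i _ => key i)
      _ = ∑ i, r i := Equiv.sum_comp σ r
  · have hz : M (σ (σ⁻¹ j₀)) (σ⁻¹ j₀) = 0 := by
      rw [Equiv.Perm.inv_def, Equiv.apply_symm_apply]
      refine h1 _ ?_
      intro hc
      exact hσ (by rw [← hc, Equiv.apply_symm_apply])
    have : (∏ i, M (σ i) i) = 0 := Finset.prod_eq_zero (Finset.mem_univ (σ⁻¹ j₀)) hz
    rw [this]
    simp

end DetBound


noncomputable section Casor
open Matrix

instance : Uncountable ℂ := Complex.ofReal_injective.uncountable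

local notation "FF" => FractionRing (Polynomial ℂ)
local notation "ιF" => algebraMap ℂ[X] (FractionRing (Polynomial ℂ))

noncomputable def σF (κ : ℂ) : FractionRing (Polynomial ℂ) →+* FractionRing (Polynomial ℂ) :=
  IsFractionRing.lift (g := (algebraMap ℂ[X] (FractionRing (Polynomial ℂ))).comp (compHom κ))
    ((IsFractionRing.injective ℂ[X] (FractionRing (Polynomial ℂ))).comp (compHom_injective κ))

lemma σF_algebraMap (κ : ℂ) (p : ℂ[X]) :
    σF κ (ιF p) = ιF (p.comp (X + C κ)) :=
  IsFractionRing.lift_algebraMap _ _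

lemma ιF_eq_zero_iff {p : ℂ[X]} : ιF p = 0 ↔ p = 0 := IsFractionRing.to_map_eq_zero_iff

lemma exists_const_of_fixed {κ : ℂ} (hκ : κ ≠ 0) (x : FF) (hx : σF κ x = x) :
    ∃ γ : ℂ, x = ιF (C γ) := by
  obtain ⟨a, b, hbmem, hab⟩ := IsFractionRing.div_surjective (A := ℂ[X]) x
  have hb : b ≠ 0 := nonZeroDivisors.ne_zero hbmem
  have hrep : ∀ k : ℕ, ιF (a.comp (X + C ((k:ℂ) * κ))) / ιF (b.comp (X + C ((k:ℂ) * κ))) = x := by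
    intro k
    induction k with
    | zero => simpa using hab
    | succ k ih =>
      have h2 := congrArg (σF κ) ih
      rw [map_div₀, σF_algebraMap, σF_algebraMap, hx,
        comp_linear_comp_linear, comp_linear_comp_linear] at h2
      have hc : ((k:ℂ) * κ + κ) = ((k+1 : ℕ) : ℂ) * κ := by push_cast; ring
      rw [hc] at h2
      exact h2
  have hcross : ∀ k : ℕ,
      (a.comp (X + C ((k:ℂ)*κ))) * b = a * (b.comp (X + C ((k:ℂ)*κ))) := by
    intro k
    have h1 := hrep k
    rw [← hab] at h1
    have hbk : ιF (b.comp (X + C ((k:ℂ)*κ))) ≠ 0 := by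
      rw [Ne, ιF_eq_zero_iff, comp_linear_eq_zero_iff]; exact hb
    have hb0 : ιF b ≠ 0 := by rw [Ne, ιF_eq_zero_iff]; exact hb
    have h2 := (div_eq_div_iff hbk hb0).mp h1
    rw [← _root_.map_mul, ← _root_.map_mul] at h2
    exact IsFractionRing.injective ℂ[X] (FractionRing (Polynomial ℂ)) h2
  obtain ⟨t, ht⟩ : ∃ t : ℂ, t ∉ ⋃ k : ℕ, {s : ℂ | (b.comp (X + C ((k:ℂ)*κ))).IsRoot s} := by
    by_contra hcon
    push_neg at hcon
    have hcnt : (⋃ k : ℕ, {s : ℂ | (b.comp (X + C ((k:ℂ)*κ))).IsRoot s}).Countable := by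
      refine Set.countable_iUnion (fun k => ?_)
      exact (finite_setOf_isRoot (p := b.comp (X + C ((k:ℂ)*κ)))
        (comp_linear_eq_zero_iff.not.mpr hb)).countable
    have huniv : (⋃ k : ℕ, {s : ℂ | (b.comp (X + C ((k:ℂ)*κ))).IsRoot s}) = Set.univ :=
      Set.eq_univ_of_forall hcon
    rw [huniv] at hcnt
    exact Set.not_countable_univ hcnt
  have hbt : ∀ k : ℕ, b.eval (t + (k:ℂ)*κ) ≠ 0 := by
    intro k hk
    refine ht (Set.mem_iUnion.mpr ⟨k, ?_⟩)
    simp only [Set.mem_setOf_eq, IsRoot, eval_comp, eval_add, eval_X, eval_C]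
    exact hk
  have heval : ∀ k : ℕ, a.eval (t + (k:ℂ)*κ) * b.eval t = a.eval t * b.eval (t + (k:ℂ)*κ) := by
    intro k
    have h3 := congrArg (Polynomial.eval t) (hcross k)
    simpa [eval_comp] using h3
  have hBT : b.eval t ≠ 0 := by
    have := hbt 0
    simpa using this
  have hginf : C (b.eval t) * a - C (a.eval t) * b = 0 := by
    apply eq_zero_of_infinite_isRoot
    apply Set.infinite_of_injective_forall_mem (f := fun k : ℕ => t + (k:ℂ)*κ)
    · intro k1 k2 h
      have h1 : (k1:ℂ) * κ = (k2:ℂ) * κ := by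
        have := add_left_cancel h
        exact this
      have h2 : (k1:ℂ) = (k2:ℂ) := mul_right_cancel₀ hκ h1
      exact_mod_cast h2
    · intro k
      simp only [Set.mem_setOf_eq, IsRoot, eval_sub, eval_mul, eval_C]
      have := heval k
      ring_nf
      ring_nf at this
      linear_combination this
  rw [sub_eq_zero] at hginf
  refine ⟨a.eval t / b.eval t, ?_⟩
  have ha' : a = C (a.eval t / b.eval t) * b := by
    have hkey : (b.eval t) * (a.eval t / b.eval t) = a.eval t := by field_simp
    refine mul_left_cancel₀ (b := a) (show (C (b.eval t) : ℂ[X]) ≠ 0 by simp [hBT]) ?_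
    rw [hginf, ← mul_assoc, ← C_mul, hkey]
  have hb0 : ιF b ≠ 0 := by rw [Ne, ιF_eq_zero_iff]; exact hb
  rw [← hab, ha', _root_.map_mul]
  field_simp
  rw [eval_mul, eval_C, mul_div_assoc, div_self hBT, mul_one]


lemma σF_shift {κ : ℂ} (q : ℂ[X]) (c : ℂ) :
    σF κ (ιF (q.comp (X + C c))) = ιF (q.comp (X + C (c + κ))) := by
  rw [σF_algebraMap, comp_linear_comp_linear]

lemma casoratian_criterion {κ : ℂ} (hκ : κ ≠ 0) :
    ∀ (M : ℕ) (f : Fin M → ℂ[X]),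
      (Matrix.of fun i k : Fin M => (f i).comp (X + C (((k:ℕ):ℂ) * κ))).det = 0 →
      ∃ γ : Fin M → ℂ, γ ≠ 0 ∧ ∑ i, C (γ i) * f i = 0 := by
  intro M
  induction M with
  | zero =>
    intro f h
    exfalso
    rw [Matrix.det_isEmpty] at h
    exact one_ne_zero h
  | succ M IH =>
    intro f hdet
    set N : Matrix (Fin (M+1)) (Fin (M+1)) (FractionRing (Polynomial ℂ)) :=
      Matrix.of (fun k i : Fin (M+1) => ιF ((f i).comp (X + C (((k:ℕ):ℂ) * κ)))) with hN
    have hdetN : N.det = 0 := by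
      have hNt : N = Matrix.transpose ((algebraMap ℂ[X] (FractionRing (Polynomial ℂ))).mapMatrix
          (Matrix.of fun i k : Fin (M+1) => (f i).comp (X + C (((k:ℕ):ℂ) * κ)))) := by
        ext k i
        simp [hN, Matrix.transpose_apply]
      rw [hNt, Matrix.det_transpose, ← RingHom.map_det, hdet, map_zero]
    have σN : ∀ (k : Fin M) (i : Fin (M+1)), σF κ (N k.castSucc i) = N k.succ i := by
      intro k i
      show σF κ (ιF ((f i).comp (X + C ((((k.castSucc : Fin (M+1)) : ℕ):ℂ) * κ))))
          = ιF ((f i).comp (X + C ((((k.succ : Fin (M+1)) : ℕ):ℂ) * κ)))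
      rw [σF_shift]
      congr 3
      rw [Fin.coe_castSucc, Fin.val_succ]
      push_cast
      ring
    set W : Matrix (Fin M) (Fin M) (FractionRing (Polynomial ℂ)) :=
      Matrix.of (fun k i : Fin M => N k.castSucc i.castSucc) with hW
    by_cases hdW : W.det = 0
    · -- degenerate sub-case: use induction hypothesis
      have hsub : (Matrix.of fun i k : Fin M =>
          (f i.castSucc).comp (X + C (((k:ℕ):ℂ) * κ))).det = 0 := by
        have hWt : W = Matrix.transpose ((algebraMap ℂ[X] (FractionRing (Polynomial ℂ))).mapMatrix
            (Matrix.of fun i k : Fin M => (f i.castSucc).comp (X + C (((k:ℕ):ℂ) * κ)))) := by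
          ext k i
          simp [hW, hN, Matrix.transpose_apply]
        rw [hWt, Matrix.det_transpose, ← RingHom.map_det] at hdW
        exact ιF_eq_zero_iff.mp hdW
      obtain ⟨γ, hγ, hγsum⟩ := IH _ hsub
      obtain ⟨i0, hi0⟩ := Function.ne_iff.mp hγ
      refine ⟨Fin.snoc γ 0, Function.ne_iff.mpr ⟨i0.castSucc, by simpa using hi0⟩, ?_⟩
      rw [Fin.sum_univ_castSucc]
      simp only [Fin.snoc_castSucc, Fin.snoc_last, map_zero, zero_mul, add_zero]
      exact hγsum
    · -- nondegenerate: build constants via Cramer-type argument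
      obtain ⟨g, hg0, hgv⟩ := (Matrix.exists_mulVec_eq_zero_iff).mpr hdetN
      have hroweq : ∀ k : Fin (M+1), ∑ i, N k i * g i = 0 := by
        intro k
        have := congrFun hgv k
        simpa [Matrix.mulVec, dotProduct] using this
      have hglast : g (Fin.last M) ≠ 0 := by
        intro h0
        apply hg0
        have hWg : W *ᵥ (fun i => g i.castSucc) = 0 := by
          funext k
          have h5 := hroweq k.castSucc
          rw [Fin.sum_univ_castSucc, h0, mul_zero, add_zero] at h5
          simpa [Matrix.mulVec, dotProduct, hW] using h5
        have hz := Matrix.eq_zero_of_mulVec_eq_zero hdW hWg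
        funext i
        induction i using Fin.lastCases with
        | last => exact h0
        | cast j => exact congrFun hz j
      set c : Fin M → FractionRing (Polynomial ℂ) :=
        fun i => - g i.castSucc / g (Fin.last M) with hc
      have key : ∀ k : Fin (M+1),
          ∑ i : Fin M, c i * N k i.castSucc = N k (Fin.last M) := by
        intro k
        have h5 := hroweq k
        rw [Fin.sum_univ_castSucc] at h5
        have h7 : ∑ i : Fin M, c i * N k i.castSucc
            = (∑ i : Fin M, -(N k i.castSucc * g i.castSucc)) / g (Fin.last M) := by
          rw [Finset.sum_div]
          refine Finset.sum_congr rfl (fun i _ => ?_)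
          show -g i.castSucc / g (Fin.last M) * N k i.castSucc
              = -(N k i.castSucc * g i.castSucc) / g (Fin.last M)
          rw [div_mul_eq_mul_div]
          congr 1
          ring
        rw [h7, div_eq_iff hglast, Finset.sum_neg_distrib]
        linear_combination -h5
      have hfix : ∀ i, σF κ (c i) = c i := by
        have hM2 : (Matrix.of fun k i : Fin M => N k.succ i.castSucc) *ᵥ
            (fun i => σF κ (c i) - c i) = 0 := by
          funext k
          have e1 := congrArg (σF κ) (key k.castSucc)
          rw [map_sum] at e1
          simp only [_root_.map_mul, σN] at e1
          have e2 := key k.succ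
          show ∑ i : Fin M, N k.succ i.castSucc * (σF κ (c i) - c i) = 0
          have : ∑ i : Fin M, N k.succ i.castSucc * (σF κ (c i) - c i)
              = (∑ i : Fin M, σF κ (c i) * N k.succ i.castSucc)
                - ∑ i : Fin M, c i * N k.succ i.castSucc := by
            rw [← Finset.sum_sub_distrib]
            refine Finset.sum_congr rfl (fun i _ => ?_)
            ring
          rw [this, e1, e2, sub_self]
        have hdetM2 : (Matrix.of fun k i : Fin M => N k.succ i.castSucc).det ≠ 0 := by
          have hM2W : (Matrix.of fun k i : Fin M => N k.succ i.castSucc)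
              = (σF κ).mapMatrix W := by
            ext k i
            simp only [Matrix.of_apply, RingHom.mapMatrix_apply, Matrix.map_apply, hW]
            exact (σN k i.castSucc).symm
          rw [hM2W, ← RingHom.map_det]
          intro hcon
          exact hdW ((σF κ).injective (by rw [hcon, map_zero]))
        have hz := Matrix.eq_zero_of_mulVec_eq_zero hdetM2 hM2
        intro i
        have := congrFun hz i
        simpa [sub_eq_zero] using this
      choose γ hγ using fun i => exists_const_of_fixed hκ (c i) (hfix i)
      have hN0 : ∀ i : Fin (M+1), N 0 i = ιF (f i) := by
        intro i
        show ιF ((f i).comp (X + C ((((0 : Fin (M+1)) : ℕ):ℂ) * κ))) = ιF (f i)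
        norm_num
      have hpoly : ∑ i : Fin M, C (γ i) * f i.castSucc - f (Fin.last M) = 0 := by
        apply IsFractionRing.injective ℂ[X] (FractionRing (Polynomial ℂ))
        rw [map_zero, map_sub, map_sum]
        have h8 := key 0
        rw [hN0] at h8
        rw [sub_eq_zero]
        rw [← h8]
        refine Finset.sum_congr rfl (fun i _ => ?_)
        rw [_root_.map_mul, ← hγ i, hN0]
      refine ⟨Fin.snoc γ (-1), ?_, ?_⟩
      · refine Function.ne_iff.mpr ⟨Fin.last M, ?_⟩
        simp [Fin.snoc_last]
      · rw [Fin.sum_univ_castSucc]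
        simp only [Fin.snoc_castSucc, Fin.snoc_last, _root_.map_neg, _root_.map_one, neg_mul, one_mul]
        linear_combination hpoly

end Casor

section Master
open Matrix

lemma kFac_eq_prod (κ : ℂ) (n : ℕ) (q : ℂ[X]) :
    kFac κ n q = ∏ j ∈ Finset.range n, q.comp (X + C ((j : ℂ) * κ)) := rfl

lemma kFac_ne_zero {κ : ℂ} {n : ℕ} {q : ℂ[X]} (hq : q ≠ 0) : kFac κ n q ≠ 0 := by
  rw [kFac_eq_prod]
  exact Finset.prod_ne_zero_iff.mpr (fun j _ => comp_linear_eq_zero_iff.not.mpr hq)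

lemma natDegree_kFac {κ : ℂ} {n : ℕ} {q : ℂ[X]} (hq : q ≠ 0) :
    (kFac κ n q).natDegree = n * q.natDegree := by
  have h2 : ∑ j ∈ Finset.range n, (q.comp (X + C ((j:ℂ) * κ))).natDegree
      = ∑ _j ∈ Finset.range n, q.natDegree :=
    Finset.sum_congr rfl (fun j _ => natDegree_comp_linear q ((j:ℂ)*κ))
  rw [kFac_eq_prod, natDegree_prod _ _ (fun j _ => comp_linear_eq_zero_iff.not.mpr hq), h2,
    Finset.sum_const, Finset.card_range, smul_eq_mul]

lemma sq_sub_mono {t m : ℕ} (h2 : 2 ≤ t) (htm : t ≤ m) : t^2 - t - 1 ≤ m^2 - m - 1 := by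
  have h1 : t * t ≤ m * m := Nat.mul_le_mul htm htm
  have h5 : t^2 + m ≤ m^2 + t := by nlinarith
  omega

set_option maxHeartbeats 1600000 in
lemma master_lemma : ∀ (m : ℕ), 2 ≤ m → ∀ (κ : ℂ), κ ≠ 0 → ∀ (n : ℕ) (p : Fin m → ℂ[X])
    (μ : Fin m → ℂ), (∀ i, 0 < (p i).natDegree) → (∀ i, μ i ≠ 0) →
    (∑ i, C (μ i) * kFac κ n (p i)) = 1 → n ≤ m^2 - m - 1 := by
  intro m
  induction m using Nat.strong_induction_on with
  | _ m IH =>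
  intro hm κ hκ n p μ hnc hμ hsum
  by_cases hnm : n < m
  · have h1 : 2 * m ≤ m^2 := by nlinarith
    omega
  push_neg at hnm
  have hn1 : 1 ≤ n := le_trans (by omega) hnm
  set d : Fin m → ℕ := fun i => (p i).natDegree with hd
  have hd1 : ∀ i, 1 ≤ d i := fun i => hnc i
  have hpne : ∀ i, p i ≠ 0 := fun i => fun hz => by simpa [hz] using hnc i
  set G : Fin m → ℂ[X] := fun i => C (μ i) * kFac κ n (p i) with hG
  have hGne : ∀ i, G i ≠ 0 := fun i =>
    mul_ne_zero (by simp [hμ i]) (kFac_ne_zero (hpne i))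
  have hGdeg : ∀ i, (G i).natDegree = n * d i := fun i => by
    rw [hG]
    simp only
    rw [natDegree_C_mul (hμ i), natDegree_kFac (hpne i)]
  set A : Matrix (Fin m) (Fin m) ℂ[X] :=
    Matrix.of (fun i k : Fin m => (G i).comp (X + C (((k : ℕ) : ℂ) * κ))) with hA
  by_cases hdet : A.det = 0
  · -- degenerate case: reduce the number of terms
    obtain ⟨γ, hγ0, hγsum⟩ := casoratian_criterion hκ m G hdet
    obtain ⟨j, hj⟩ := Function.ne_iff.mp hγ0
    set lam : Fin m → ℂ := fun i => γ i * μ i with hlamdef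
    have hlamj : lam j ≠ 0 := mul_ne_zero hj (hμ j)
    set ν : Fin m → ℂ := fun i => μ i - (μ j / lam j) * lam i with hν
    have hνj : ν j = 0 := by
      rw [hν]
      field_simp
      simp
    have hνsum : ∑ i, C (ν i) * kFac κ n (p i) = 1 := by
      have hexp : ∀ i, C (ν i) * kFac κ n (p i)
          = G i - C (μ j / lam j) * (C (γ i) * G i) := by
        intro i
        rw [hG, hν]
        simp only [hlamdef, map_sub, C_mul, map_div₀]
        ring
      rw [Finset.sum_congr rfl (fun i _ => hexp i), Finset.sum_sub_distrib, hsum,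
        ← Finset.mul_sum, hγsum, mul_zero, sub_zero]
    classical
    set T : Finset (Fin m) := Finset.univ.filter (fun i => ν i ≠ 0) with hT
    have hsumT : ∑ i ∈ T, C (ν i) * kFac κ n (p i) = 1 := by
      rw [hT, Finset.sum_filter_of_ne, hνsum]
      intro x _ hx hνx
      exact hx (by rw [hνx]; simp)
    have hjT : j ∉ T := by simp [hT, hνj]
    have hTlt : T.card < m := by
      have : T ⊆ Finset.univ.erase j := fun x hx =>
        Finset.mem_erase.mpr ⟨fun he => hjT (he ▸ hx), Finset.mem_univ x⟩
      calc T.card ≤ (Finset.univ.erase j).card := Finset.card_le_card this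
        _ = m - 1 := by rw [Finset.card_erase_of_mem (Finset.mem_univ j), Finset.card_univ,
            Fintype.card_fin]
        _ < m := by omega
    rcases Nat.lt_or_ge T.card 2 with hc2 | hc2
    · -- 0 or 1 terms: contradiction
      interval_cases h : T.card
      · exfalso
        rw [Finset.card_eq_zero.mp h, Finset.sum_empty] at hsumT
        exact one_ne_zero hsumT.symm
      · exfalso
        obtain ⟨i0, hi0⟩ := Finset.card_eq_one.mp h
        rw [hi0, Finset.sum_singleton] at hsumT
        have hdeg := congrArg natDegree hsumT
        have hi0T : i0 ∈ T := by rw [hi0]; exact Finset.mem_singleton_self i0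
        have hν0 : ν i0 ≠ 0 := (Finset.mem_filter.mp hi0T).2
        rw [natDegree_C_mul hν0, natDegree_kFac (hpne i0), natDegree_one] at hdeg
        have h9 : 0 < (p i0).natDegree := hnc i0
        have h10 : 0 < n * (p i0).natDegree := Nat.mul_pos (by omega) h9
        omega
    · -- at least 2 terms: apply induction hypothesis
      set t := T.card with ht
      have e := T.orderIsoOfFin rfl
      set p' : Fin t → ℂ[X] := fun a => p ((e a) : Fin m) with hp'
      set ν' : Fin t → ℂ := fun a => ν ((e a) : Fin m) with hν'
      have hsum' : ∑ a, C (ν' a) * kFac κ n (p' a) = 1 := by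
        rw [← hsumT, ← Finset.sum_attach T (fun x => C (ν x) * kFac κ n (p x)),
          ← Finset.univ_eq_attach,
          ← Equiv.sum_comp e.toEquiv (fun x => C (ν (x : Fin m)) * kFac κ n (p (x : Fin m)))]
        rfl
      have hres := IH t hTlt hc2 κ hκ n p' ν' (fun a => hnc _)
        (fun a => (Finset.mem_filter.mp (e a).2).2) hsum'
      exact le_trans hres (sq_sub_mono hc2 (le_of_lt hTlt))
  · -- nondegenerate case: determinant argument
    classical
    have hk0 : (0:ℕ) < m := by omega
    set k0 : Fin m := ⟨0, hk0⟩ with hk0def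
    obtain ⟨j₀, _, hj₀max⟩ := Finset.exists_max_image Finset.univ d ⟨k0, Finset.mem_univ k0⟩
    set Φ : Fin m → ℕ → ℂ[X] := fun i j => (p i).comp (X + C ((j:ℂ) * κ)) with hΦ
    have hΦne : ∀ i j, Φ i j ≠ 0 := fun i j => comp_linear_eq_zero_iff.not.mpr (hpne i)
    have hΦdeg : ∀ i j, (Φ i j).natDegree = d i := fun i j => natDegree_comp_linear _ _
    have hAp : ∀ (i k : Fin m), A i k = C (μ i) * ∏ j ∈ Finset.Ico (k:ℕ) (n + (k:ℕ)), Φ i j := by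
      intro i k
      show (G i).comp (X + C (((k:ℕ):ℂ) * κ)) = _
      rw [hG]
      simp only
      rw [mul_comp, C_comp, kFac_eq_prod]
      congr 1
      have hpc : (∏ j ∈ Finset.range n, (p i).comp (X + C ((j:ℂ) * κ))).comp
            (X + C (((k:ℕ):ℂ) * κ))
          = ∏ j ∈ Finset.range n,
              ((p i).comp (X + C ((j:ℂ) * κ))).comp (X + C (((k:ℕ):ℂ) * κ)) :=
        map_prod (compHom (((k:ℕ):ℂ) * κ)) _ _
      rw [hpc]
      have hterm : ∀ j ∈ Finset.range n,
          ((p i).comp (X + C ((j:ℂ) * κ))).comp (X + C (((k:ℕ):ℂ) * κ))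
            = Φ i (j + (k:ℕ)) := by
        intro j _
        rw [comp_linear_comp_linear]
        have hcast : ((j:ℂ) * κ + ((k:ℕ):ℂ) * κ) = ((↑(j + (k:ℕ)) : ℂ) * κ) := by
          push_cast; ring
        rw [hcast, hΦ]
      rw [Finset.prod_congr rfl hterm, Finset.prod_Ico_eq_prod_range]
      have hnk : (n + (k:ℕ)) - (k:ℕ) = n := by omega
      rw [hnk]
      exact Finset.prod_congr rfl (fun j _ => by rw [add_comm])
    set H : Fin m → ℂ[X] := fun i => ∏ j ∈ Finset.Ico (m-1) n, Φ i j with hH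
    set Q : Matrix (Fin m) (Fin m) ℂ[X] := Matrix.of (fun i k =>
      C (μ i) * ∏ j ∈ (Finset.Ico (k:ℕ) (n + (k:ℕ))) \ (Finset.Ico (m-1) n), Φ i j) with hQ
    have hsub : ∀ k : Fin m, Finset.Ico (m-1) n ⊆ Finset.Ico (k:ℕ) (n + (k:ℕ)) := by
      intro k x hx
      rw [Finset.mem_Ico] at hx ⊢
      have hkm : (k:ℕ) < m := k.is_lt
      omega
    have hAHQ : A = Matrix.of (fun i k => H i * Q i k) := by
      ext i k
      rw [Matrix.of_apply, hAp i k, hH, hQ]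
      simp only [Matrix.of_apply]
      rw [← Finset.prod_sdiff (hsub k)]
      ring
    have hdetfac : A.det = (∏ i, H i) * Q.det := by
      rw [hAHQ]
      exact Matrix.det_mul_column H Q
    have hHne : ∀ i, H i ≠ 0 := fun i => Finset.prod_ne_zero_iff.mpr (fun j _ => hΦne i j)
    have hHdeg : ∀ i, (H i).natDegree = (n - (m-1)) * d i := by
      intro i
      rw [hH]
      simp only
      rw [natDegree_prod _ _ (fun j _ => hΦne i j)]
      have hcongr : ∑ j ∈ Finset.Ico (m-1) n, (Φ i j).natDegree
          = ∑ _j ∈ Finset.Ico (m-1) n, d i :=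
        Finset.sum_congr rfl (fun j _ => hΦdeg i j)
      rw [hcongr, Finset.sum_const, Nat.card_Ico, smul_eq_mul]
    have hQdet : Q.det ≠ 0 := by
      intro h0; exact hdet (by rw [hdetfac, h0, mul_zero])
    have hlower : ∑ i, (n - (m-1)) * d i ≤ A.det.natDegree := by
      rw [hdetfac, natDegree_mul (Finset.prod_ne_zero_iff.mpr (fun i _ => hHne i)) hQdet]
      have hprod : (∏ i, H i).natDegree = ∑ i, (n - (m-1)) * d i := by
        rw [natDegree_prod _ _ (fun i _ => hHne i)]
        exact Finset.sum_congr rfl (fun i _ => hHdeg i)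
      omega
    have hsumA : ∀ k : Fin m, ∑ i, A i k = 1 := by
      intro k
      have hmap : ∑ i, A i k = compHom (((k:ℕ):ℂ) * κ) (∑ i, G i) := by
        rw [map_sum]
        rfl
      rw [hmap, hsum, _root_.map_one]
    set A' : Matrix (Fin m) (Fin m) ℂ[X] := A.updateRow j₀ (fun _ => 1) with hA'
    have hdetA' : A'.det = A.det := by
      have hones : (fun _ : Fin m => (1:ℂ[X]))
          = (1:ℂ[X]) • A j₀ + ∑ i ∈ Finset.univ.erase j₀, (1:ℂ[X]) • A i := by
        funext k
        rw [Pi.add_apply, Pi.smul_apply, smul_eq_mul, one_mul, Finset.sum_apply]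
        have hss : ∑ i ∈ Finset.univ.erase j₀, ((1:ℂ[X]) • A i) k
            = ∑ i ∈ Finset.univ.erase j₀, A i k :=
          Finset.sum_congr rfl (fun i _ => by simp)
        rw [hss, Finset.add_sum_erase _ (fun i => A i k) (Finset.mem_univ j₀), hsumA k]
      rw [hA', hones]
      have hav := Matrix.det_updateRow_sum_aux A (Finset.univ.erase j₀)
        (Finset.univ.notMem_erase j₀) (fun _ => (1:ℂ[X])) 1
      simpa using hav
    set E : Matrix (Fin m) (Fin m) ℂ[X] := Matrix.of (fun k l =>
      if k = l then 1 else if k = k0 then -1 else 0) with hE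
    have hdetE : E.det = 1 := by
      have htri : E.BlockTriangular id := by
        intro k l hlt
        rw [hE]
        simp only [Matrix.of_apply]
        rw [if_neg, if_neg]
        · intro hkk0
          rw [hkk0] at hlt
          exact Nat.not_lt_zero (l : ℕ) hlt
        · intro hkl
          rw [hkl] at hlt
          exact lt_irrefl _ hlt
      rw [Matrix.det_of_upperTriangular htri]
      rw [hE]
      simp
    set B : Matrix (Fin m) (Fin m) ℂ[X] := A' * E with hB
    have hdetB : B.det = A.det := by
      rw [hB, Matrix.det_mul, hdetE, mul_one, hdetA']
    have hBentry : ∀ i l : Fin m, B i l = if l = k0 then A' i k0 else A' i l - A' i k0 := by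
      intro i l
      rw [hB, Matrix.mul_apply]
      by_cases hl : l = k0
      · subst hl
        rw [if_pos rfl]
        have hsingle : ∀ k : Fin m, A' i k * E k k0 = if k = k0 then A' i k0 else 0 := by
          intro k
          rw [hE]
          simp only [Matrix.of_apply]
          by_cases hk : k = k0
          · subst hk; simp
          · simp [hk]
        rw [Finset.sum_congr rfl (fun k _ => hsingle k),
          Finset.sum_ite_eq' Finset.univ k0 (fun _ => A' i k0)]
        simp
      · rw [if_neg hl]
        have hsingle : ∀ k : Fin m, A' i k * E k l
            = (if k = l then A' i l else 0) + (if k = k0 then -(A' i k0) else 0) := by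
          intro k
          rw [hE]
          simp only [Matrix.of_apply]
          by_cases hk1 : k = l
          · subst hk1
            simp [hl]
          · by_cases hk2 : k = k0
            · subst hk2
              simp [hk1]
            · simp [hk1, hk2]
        rw [Finset.sum_congr rfl (fun k _ => hsingle k), Finset.sum_add_distrib,
          Finset.sum_ite_eq' Finset.univ l (fun _ => A' i l),
          Finset.sum_ite_eq' Finset.univ k0 (fun _ => -(A' i k0))]
        simp [sub_eq_add_neg]
    set r : Fin m → ℕ := fun i => if i = j₀ then 0 else n * d i - 1 with hr
    have hupper : B.det.natDegree ≤ ∑ i, r i := by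
      refine natDegree_det_le_special B r j₀ k0 ?_ ?_ ?_
      · intro l hl
        rw [hBentry j₀ l, if_neg hl]
        have h1 : A' j₀ l = 1 := by
          rw [hA']
          exact congrFun Matrix.updateRow_self l
        have h2 : A' j₀ k0 = 1 := by
          rw [hA']
          exact congrFun Matrix.updateRow_self k0
        rw [h1, h2, sub_self]
      · have h2 : B j₀ k0 = 1 := by
          rw [hBentry, if_pos rfl, hA']
          exact congrFun Matrix.updateRow_self k0
        rw [h2, natDegree_one, hr]
        simp
      · intro i k hi hk
        have hAi1 : A' i k = A i k := by
          rw [hA']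
          exact congrFun (Matrix.updateRow_ne hi) k
        have hAi2 : A' i k0 = A i k0 := by
          rw [hA']
          exact congrFun (Matrix.updateRow_ne hi) k0
        rw [hBentry i k, if_neg hk, hAi1, hAi2]
        have hdeg1 : (A i k).natDegree = n * d i := by
          show ((G i).comp (X + C (((k:ℕ):ℂ) * κ))).natDegree = _
          rw [natDegree_comp_linear, hGdeg]
        have hdeg2 : (A i k0).natDegree = n * d i := by
          show ((G i).comp (X + C (((k0:ℕ):ℂ) * κ))).natDegree = _
          rw [natDegree_comp_linear, hGdeg]
        have hlc : (A i k).leadingCoeff = (A i k0).leadingCoeff := by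
          show ((G i).comp _).leadingCoeff = ((G i).comp _).leadingCoeff
          rw [leadingCoeff_comp_linear, leadingCoeff_comp_linear]
        have hrne : r i = n * d i - 1 := by rw [hr]; simp [hi]
        rw [hrne]
        by_cases hzero : A i k - A i k0 = 0
        · rw [hzero, natDegree_zero]
          exact Nat.zero_le _
        · have hne1 : A i k ≠ 0 := by
            show (G i).comp _ ≠ 0
            exact comp_linear_eq_zero_iff.not.mpr (hGne i)
          have hne2 : A i k0 ≠ 0 := by
            show (G i).comp _ ≠ 0
            exact comp_linear_eq_zero_iff.not.mpr (hGne i)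
          have hdd : (A i k).degree = (A i k0).degree := by
            rw [degree_eq_natDegree hne1, degree_eq_natDegree hne2, hdeg1, hdeg2]
          have hlt := degree_sub_lt hdd hne1 hlc
          have hfin := natDegree_lt_natDegree hzero hlt
          omega
    have hsumr : ∑ i, r i = ∑ i ∈ Finset.univ.erase j₀, (n * d i - 1) := by
      rw [← Finset.add_sum_erase _ r (Finset.mem_univ j₀)]
      have hrj : r j₀ = 0 := by rw [hr]; simp
      rw [hrj, zero_add]
      refine Finset.sum_congr rfl (fun i hi => ?_)
      rw [hr]
      simp [(Finset.mem_erase.mp hi).1]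
    have hkey : ∑ i, (n - (m-1)) * d i ≤ ∑ i ∈ Finset.univ.erase j₀, (n * d i - 1) :=
      le_trans hlower (le_trans (le_of_eq (congrArg natDegree hdetB.symm))
        (le_trans hupper (le_of_eq hsumr)))
    set S : ℕ := ∑ i, d i with hS
    set S' : ℕ := ∑ i ∈ Finset.univ.erase j₀, d i with hS'
    have hSS' : S = d j₀ + S' := by
      rw [hS, hS', ← Finset.add_sum_erase _ d (Finset.mem_univ j₀)]
    have hSle : S ≤ m * d j₀ := by
      calc S ≤ ∑ _i : Fin m, d j₀ :=
            Finset.sum_le_sum (fun i _ => hj₀max i (Finset.mem_univ i))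
        _ = m * d j₀ := by
            rw [Finset.sum_const, Finset.card_univ, Fintype.card_fin, smul_eq_mul]
    have hcard : (Finset.univ.erase j₀).card = m - 1 := by
      rw [Finset.card_erase_of_mem (Finset.mem_univ j₀), Finset.card_univ, Fintype.card_fin]
    have hLHS : ∑ i, (n - (m-1)) * d i = (n - (m-1)) * S := by
      rw [hS, Finset.mul_sum]
    rw [hLHS] at hkey
    have hN1 : (n - (m-1)) * S + (m-1) ≤ n * S' := by
      have hle : ∑ i ∈ Finset.univ.erase j₀, ((n * d i - 1) + 1)
          ≤ ∑ i ∈ Finset.univ.erase j₀, n * d i := by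
        refine Finset.sum_le_sum (fun i _ => ?_)
        have h1i : 1 ≤ n * d i := by
          have := Nat.mul_le_mul hn1 (hd1 i)
          simpa using this
        omega
      rw [Finset.sum_add_distrib, Finset.sum_const, hcard, smul_eq_mul, mul_one,
        ← Finset.mul_sum, ← hS'] at hle
      omega
    have hm1n : (m-1:ℕ) ≤ n := by omega
    have hZ : ((n:ℤ) - ((m:ℤ) - 1)) * (S:ℤ) + ((m:ℤ) - 1) ≤ (n:ℤ) * (S':ℤ) := by
      zify [hm1n, (show 1 ≤ m by omega)] at hN1
      convert hN1 using 3 <;> push_cast <;> ring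
    have hSS'Z : (S:ℤ) = (d j₀ : ℤ) + (S':ℤ) := by exact_mod_cast hSS'
    have hSleZ : (S:ℤ) ≤ (m:ℤ) * (d j₀:ℤ) := by exact_mod_cast hSle
    have hcZ : (1:ℤ) ≤ (d j₀:ℤ) := by exact_mod_cast hd1 j₀
    have hmZ : (2:ℤ) ≤ (m:ℤ) := by exact_mod_cast hm
    have hnmZ : (m:ℤ) ≤ (n:ℤ) := by exact_mod_cast hnm
    rw [hSS'Z] at hZ hSleZ
    clear_value S S' d
    have hfinalZ : (n:ℤ) + (m:ℤ) + 1 ≤ (m:ℤ) * (m:ℤ) := by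
      by_contra hcon
      push_neg at hcon
      have h5 : ((m:ℤ) * m - m) ≤ n := by linarith
      have h6 : ((m:ℤ) * m - m) * (d j₀ : ℤ) ≤ (n:ℤ) * (d j₀ : ℤ) :=
        mul_le_mul_of_nonneg_right h5 (by linarith)
      nlinarith [hZ, h6, hSleZ, hcZ, hmZ, hnmZ]
    have hfinal : n + m + 1 ≤ m * m := by exact_mod_cast hfinalZ
    have hp2 : m^2 = m*m := sq m
    omega


end Master

theorem stmt_18 (m : ℕ) (hm : 2 ≤ m) (κ : ℂ) (hκ : κ ≠ 0) (n : ℕ)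
    (p : Fin m → ℂ[X]) (hnc : ∀ i, 0 < (p i).natDegree)
    (hrp : ∀ d : ℂ[X], (∀ i, d ∣ kFac κ n (p i)) → IsUnit d)
    (hsum : ∑ i : Fin m, kFac κ n (p i) = 1) :
    n ≤ m ^ 2 - m - 1 := by
  refine master_lemma m hm κ hκ n p (fun _ => 1) hnc (fun _ => one_ne_zero) ?_
  simpa using hsum
end
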